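/- For 0 < |q| < 1 and x ≠ 0, the theta function θ(x) := (1/(q;q)_∞) · ∑_{n=-∞}^∞ (-1)^n q^{n(n-1)/2} x^n satisfies the Jacobi triple product identity θ(x) = (x; q)_∞ · (q/x; q)_∞. -/

import Mathlib

noncomputable def qp (q x : ℂ) : ℂ := ∏' n : ℕ, (1 - x * q ^ n)

noncomputable def qpInt (q x : ℂ) (n : ℤ) : ℂ := qp q x / qp q (x * q ^ n)

noncomputable def qpFin (q x : ℂ) (n : ℕ) : ℂ := ∏ j ∈ Finset.range n, (1 - x * q ^ j)

noncomputable def theta (q x : ℂ) : ℂ := qp q x * qp q (q / x)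

/-!
Expanding `(x/q^m; q)_{2m}` by the `q`-binomial theorem, and writing its first `m` factors
`1 - x q^{-j-1}` as `-x q^{-j-1} (1 - (q/x) q^j)`, gives the finite identity
`(x; q)_m (q/x; q)_m = ∑_{|n| ≤ m} (-1)^n q^{n(n-1)/2} [2m, m+n]_q x^n`.
As `m → ∞` each Gaussian binomial `[2m, m+n]_q = (q;q)_{2m} / ((q;q)_{m+n} (q;q)_{m-n})` tends to
`1/(q;q)_∞`, and all of them are bounded by one constant because `(q;q)_k → (q;q)_∞ ≠ 0`; the
theta series converges absolutely, so Tannery's theorem passes to the limit termwise.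
-/

open Finset Filter Topology

lemma Nat.succ_choose_two (n : ℕ) : (n + 1).choose 2 = n.choose 2 + n := by
  rw [Nat.choose_succ_succ', Nat.choose_one_right, add_comm]

lemma Int.natCast_choose_two (n : ℕ) : ((n.choose 2 : ℕ) : ℤ) = n * (n - 1) / 2 := by
  qify [(Int.even_mul_pred_self n).two_dvd]
  exact Nat.cast_choose_two ℚ n

lemma sum_range_add_one_eq_choose_two (m : ℕ) : ∑ j ∈ range m, (j + 1) = (m + 1).choose 2 := by
  induction m with
  | zero => rfl
  | succ m ih => rw [sum_range_succ, ih, Nat.succ_choose_two (m + 1)]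

lemma sum_Icc_neg_eq_sum_range {M : Type*} [AddCommMonoid M] (f : ℤ → M) (m : ℕ) :
    ∑ n ∈ Icc (-(m : ℤ)) m, f n = ∑ k ∈ range (2 * m + 1), f (k - m) := by
  refine sum_nbij' (fun n => (n + m).toNat) (fun k => k - m) ?_ ?_ ?_ ?_ ?_ <;>
    intro a ha <;> simp only [mem_Icc, mem_range] at ha ⊢ <;> grind

lemma summable_pow_choose_two_mul_pow {r : ℝ} (hr0 : 0 ≤ r) (hr1 : r < 1) (u : ℝ) :
    Summable fun k : ℕ => r ^ k.choose 2 * u ^ k := by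
  refine summable_of_ratio_norm_eventually_le one_half_lt_one ?_
  have hsmall : Tendsto (fun k : ℕ => r ^ k * ‖u‖) atTop (𝓝 0) := by
    simpa using (tendsto_pow_atTop_nhds_zero_of_lt_one hr0 hr1).mul_const ‖u‖
  filter_upwards [hsmall.eventually (ge_mem_nhds one_half_pos)] with k hk
  rw [show r ^ (k + 1).choose 2 * u ^ (k + 1) = r ^ k.choose 2 * u ^ k * (r ^ k * u) by
    rw [Nat.succ_choose_two]; ring, norm_mul, mul_comm (1 / 2)]
  gcongr
  rwa [norm_mul, Real.norm_of_nonneg (pow_nonneg hr0 k)]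

lemma tendsto_sum_Icc_mul {R : Type*} [NormedRing R] [CompleteSpace R] {t : ℤ → R}
    (ht : Summable fun n => ‖t n‖) {c : ℕ → ℤ → R} {l : ℤ → R} {C : ℝ}
    (hC : ∀ m n, ‖c m n‖ ≤ C) (hc : ∀ n, Tendsto (fun m => c m n) atTop (𝓝 (l n))) :
    Tendsto (fun m : ℕ => ∑ n ∈ Icc (-(m : ℤ)) m, t n * c m n) atTop (𝓝 (∑' n, t n * l n)) := by
  simp only [fun m : ℕ => sum_eq_tsum_indicator (fun n => t n * c m n) (Icc (-(m : ℤ)) m)]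
  refine tendsto_tsum_of_dominated_convergence (ht.mul_right C) (fun n => ?_)
    (.of_forall fun m n => ?_)
  · refine ((hc n).const_mul (t n)).congr' ?_
    filter_upwards [eventually_ge_atTop n.natAbs] with m hm
    rw [Set.indicator_of_mem (by simp only [coe_Icc, Set.mem_Icc]; omega)]
  · refine (norm_indicator_le_norm_self _ n).trans ((norm_mul_le _ _).trans ?_)
    gcongr
    exact hC m n

section

variable {q : ℂ}

@[simp] lemma qpFin_zero (x : ℂ) : qpFin q x 0 = 1 := prod_range_zero _

lemma qpFin_succ (x : ℂ) (m : ℕ) : qpFin q x (m + 1) = qpFin q x m * (1 - x * q ^ m) :=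
  prod_range_succ _ _

lemma qpFin_succ_eq_one_sub_mul (x : ℂ) (m : ℕ) :
    qpFin q x (m + 1) = (1 - x) * qpFin q (x * q) m := by
  simp only [qpFin, prod_range_succ', pow_zero, mul_one, pow_succ', mul_assoc, mul_comm _ (1 - x)]

lemma one_sub_mul_pow_ne_zero (hq1 : ‖q‖ < 1) (j : ℕ) : 1 - q * q ^ j ≠ 0 := by
  rw [← pow_succ', sub_ne_zero]
  intro h
  have := congrArg norm h
  rw [norm_one, norm_pow] at this
  exact (pow_lt_one₀ (norm_nonneg q) hq1 j.succ_ne_zero).ne' this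

lemma qpFin_self_ne_zero (hq1 : ‖q‖ < 1) (m : ℕ) : qpFin q q m ≠ 0 :=
  prod_ne_zero_iff.2 fun j _ => one_sub_mul_pow_ne_zero hq1 j

noncomputable def qBinom (q : ℂ) (m k : ℕ) : ℂ :=
  qpFin q q m / (qpFin q q k * qpFin q q (m - k))

lemma qBinom_zero_right (hq1 : ‖q‖ < 1) (m : ℕ) : qBinom q m 0 = 1 := by
  simp [qBinom, qpFin_self_ne_zero hq1]

lemma qBinom_self (hq1 : ‖q‖ < 1) (m : ℕ) : qBinom q m m = 1 := by
  simp [qBinom, qpFin_self_ne_zero hq1]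

lemma qBinom_succ_succ (hq1 : ‖q‖ < 1) {m k : ℕ} (hk : k < m) :
    qBinom q (m + 1) (k + 1) = qBinom q m k + q ^ (k + 1) * qBinom q m (k + 1) := by
  obtain ⟨j, rfl⟩ := Nat.exists_eq_add_of_lt hk
  rw [qBinom, qBinom, qBinom, show k + j + 1 + 1 - (k + 1) = j + 1 by omega,
    show k + j + 1 - k = j + 1 by omega, show k + j + 1 - (k + 1) = j by omega,
    qpFin_succ _ (k + j + 1), qpFin_succ _ k, qpFin_succ _ j]
  field_simp [qpFin_self_ne_zero hq1 k, qpFin_self_ne_zero hq1 j,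
    one_sub_mul_pow_ne_zero hq1 k, one_sub_mul_pow_ne_zero hq1 j]
  ring

theorem qpFin_eq_sum_qBinom (hq1 : ‖q‖ < 1) (m : ℕ) (x : ℂ) :
    qpFin q x m = ∑ k ∈ range (m + 1), (-1) ^ k * q ^ k.choose 2 * qBinom q m k * x ^ k := by
  induction m generalizing x with
  | zero => simp [qBinom_zero_right hq1]
  | succ m ih =>
    have hterm : ∀ j ∈ range m,
        (-1) ^ (j + 1) * q ^ (j + 1).choose 2 * qBinom q (m + 1) (j + 1) * x ^ (j + 1) =
          (-1) ^ (j + 1) * q ^ (j + 1).choose 2 * qBinom q m (j + 1) * (x * q) ^ (j + 1) -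
            x * ((-1) ^ j * q ^ j.choose 2 * qBinom q m j * (x * q) ^ j) := fun j hj => by
      rw [qBinom_succ_succ hq1 (mem_range.1 hj), Nat.succ_choose_two]
      ring
    rw [qpFin_succ_eq_one_sub_mul, ih]
    conv_rhs => rw [sum_range_succ', sum_range_succ, sum_congr rfl hterm, sum_sub_distrib]
    conv_lhs => rw [one_sub_mul, mul_sum, sum_range_succ', sum_range_succ]
    simp only [qBinom_self hq1, qBinom_zero_right hq1, Nat.succ_choose_two]
    ring

lemma qpFin_div_pow_two_mul (hq : q ≠ 0) {x : ℂ} (hx : x ≠ 0) (m : ℕ) :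
    qpFin q (x / q ^ m) (2 * m) =
      (-x) ^ m / q ^ (m + 1).choose 2 * (qpFin q x m * qpFin q (q / x) m) := by
  have hlow : ∀ j ∈ range m,
      1 - x / q ^ m * q ^ (m - 1 - j) = -x / q ^ (j + 1) * (1 - q / x * q ^ j) := fun j hj => by
    rw [show q ^ m = q ^ (m - 1 - j) * q ^ (j + 1) by rw [← pow_add]; congr 1; grind]
    field_simp
    ring
  have hhigh : ∀ j ∈ range m, 1 - x / q ^ m * q ^ (m + j) = 1 - x * q ^ j := fun j _ => by
    rw [pow_add]
    field_simp
  rw [qpFin, two_mul, prod_range_add, ← prod_range_reflect, prod_congr rfl hlow,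
    prod_congr rfl hhigh, prod_mul_distrib, prod_div_distrib, prod_const, card_range,
    prod_pow_eq_pow_sum, sum_range_add_one_eq_choose_two, qpFin, qpFin]
  ring

lemma gauss_term_div_pow_eq_theta_term (hq : q ≠ 0) {x : ℂ} (hx : x ≠ 0) (k m : ℕ) :
    (-1) ^ k * q ^ k.choose 2 * (x / q ^ m) ^ k = (-x) ^ m / q ^ (m + 1).choose 2 *
      ((-1) ^ ((k : ℤ) - m) * q ^ (((k : ℤ) - m) * ((k : ℤ) - m - 1) / 2) * x ^ ((k : ℤ) - m)) := by
  have hsign : (-1 : ℂ) ^ ((k : ℤ) - m) * (-1) ^ m = (-1) ^ k := by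
    rw [zpow_sub₀ (by norm_num), zpow_natCast, zpow_natCast, div_mul_cancel₀ _ (by simp)]
  have hx' : x ^ ((k : ℤ) - m) * x ^ m = x ^ k := by
    rw [zpow_sub₀ hx, zpow_natCast, zpow_natCast, div_mul_cancel₀ _ (pow_ne_zero _ hx)]
  have hq' : q ^ (((k : ℤ) - m) * ((k : ℤ) - m - 1) / 2) / q ^ (m + 1).choose 2 =
      q ^ k.choose 2 / (q ^ m) ^ k := by
    rw [← pow_mul, ← zpow_natCast, ← zpow_natCast q, ← zpow_natCast q, ← zpow_sub₀ hq,
      ← zpow_sub₀ hq]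
    congr 1
    push_cast [Int.natCast_choose_two]
    qify [(Int.even_mul_pred_self k).two_dvd, (Int.even_mul_pred_self (m + 1)).two_dvd,
      (Int.even_mul_pred_self (k - m)).two_dvd]
    ring
  rw [neg_pow, div_pow, ← hsign, ← hx']
  linear_combination -(-1 : ℂ) ^ ((k : ℤ) - m) * (-1) ^ m * x ^ ((k : ℤ) - m) * x ^ m * hq'

theorem qpFin_mul_qpFin_eq_sum (hq : q ≠ 0) (hq1 : ‖q‖ < 1) {x : ℂ} (hx : x ≠ 0) (m : ℕ) :
    qpFin q x m * qpFin q (q / x) m = ∑ n ∈ Icc (-(m : ℤ)) m,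
      (-1 : ℂ) ^ n * q ^ (n * (n - 1) / 2) * x ^ n * qBinom q (2 * m) (n + m).toNat := by
  have hc : (-x) ^ m / q ^ (m + 1).choose 2 ≠ 0 := by simp [hq, hx]
  apply mul_left_cancel₀ hc
  rw [← qpFin_div_pow_two_mul hq hx, qpFin_eq_sum_qBinom hq1, sum_Icc_neg_eq_sum_range, mul_sum]
  refine sum_congr rfl fun k _ => ?_
  rw [sub_add_cancel, Int.toNat_natCast]
  linear_combination qBinom q (2 * m) k * gauss_term_div_pow_eq_theta_term hq hx k m

lemma summable_norm_mul_pow (hq1 : ‖q‖ < 1) (y : ℂ) : Summable fun n : ℕ => ‖y * q ^ n‖ := by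
  simpa [norm_pow] using (summable_geometric_of_lt_one (norm_nonneg q) hq1).mul_left ‖y‖

lemma tendsto_qpFin (hq1 : ‖q‖ < 1) (y : ℂ) : Tendsto (qpFin q y) atTop (𝓝 (qp q y)) := by
  have : Multipliable fun n : ℕ => 1 + -(y * q ^ n) :=
    multipliable_one_add_of_summable (by simpa using summable_norm_mul_pow hq1 y)
  simp only [← sub_eq_add_neg] at this
  exact this.hasProd.tendsto_prod_nat

lemma qp_self_ne_zero (hq1 : ‖q‖ < 1) : qp q q ≠ 0 := by
  have := tprod_one_add_ne_zero_of_summable (f := fun n : ℕ => -(q * q ^ n))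
    (fun n => by simpa [← sub_eq_add_neg] using one_sub_mul_pow_ne_zero hq1 n)
    (by simpa using summable_norm_mul_pow hq1 q)
  simpa [qp, ← sub_eq_add_neg] using this

lemma exists_norm_qBinom_le (hq1 : ‖q‖ < 1) : ∃ C, ∀ m k, ‖qBinom q m k‖ ≤ C := by
  have hlim := tendsto_qpFin hq1 q
  obtain ⟨A, hA⟩ := isBounded_iff_forall_norm_le.1 (Metric.isBounded_range_of_tendsto _ hlim)
  obtain ⟨B, hB⟩ := isBounded_iff_forall_norm_le.1
    (Metric.isBounded_range_of_tendsto _ (hlim.inv₀ (qp_self_ne_zero hq1)))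
  have hA' : ∀ m, ‖qpFin q q m‖ ≤ A := fun m => hA _ ⟨m, rfl⟩
  have hB' : ∀ m, ‖(qpFin q q m)⁻¹‖ ≤ B := fun m => hB _ ⟨m, rfl⟩
  have hB0 : 0 ≤ B := (norm_nonneg _).trans (hB' 0)
  refine ⟨A * (B * B), fun m k => ?_⟩
  rw [qBinom, div_eq_mul_inv, mul_inv, norm_mul, norm_mul]
  gcongr
  exacts [(norm_nonneg _).trans (hA' 0), hA' m, hB' k, hB' (m - k)]

lemma tendsto_qBinom_two_mul (hq1 : ‖q‖ < 1) (n : ℤ) :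
    Tendsto (fun m : ℕ => qBinom q (2 * m) (n + m).toNat) atTop (𝓝 (qp q q)⁻¹) := by
  have hlim := tendsto_qpFin hq1 q
  have hk : Tendsto (fun m : ℕ => (n + m).toNat) atTop atTop :=
    tendsto_atTop_atTop.2 fun b => ⟨b + n.natAbs, fun m hm => by omega⟩
  have hl : Tendsto (fun m : ℕ => 2 * m - (n + m).toNat) atTop atTop :=
    tendsto_atTop_atTop.2 fun b => ⟨b + n.natAbs, fun m hm => by omega⟩
  have hM : Tendsto (fun m : ℕ => 2 * m) atTop atTop :=
    tendsto_atTop_atTop.2 fun b => ⟨b, fun m hm => by omega⟩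
  have hne := qp_self_ne_zero hq1
  rw [show (qp q q)⁻¹ = qp q q / (qp q q * qp q q) by field_simp]
  exact (hlim.comp hM).div ((hlim.comp hk).mul (hlim.comp hl)) (mul_ne_zero hne hne)

lemma summable_norm_theta_term (hq1 : ‖q‖ < 1) (x : ℂ) :
    Summable fun n : ℤ => ‖(-1 : ℂ) ^ n * q ^ (n * (n - 1) / 2) * x ^ n‖ := by
  refine Summable.of_nat_of_neg ?_ ?_
  · refine (summable_pow_choose_two_mul_pow (norm_nonneg q) hq1 ‖x‖).congr fun k => ?_
    simp [← Int.natCast_choose_two]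
  · refine (summable_pow_choose_two_mul_pow (norm_nonneg q) hq1 (‖q‖ * ‖x‖⁻¹)).congr
      fun k => ?_
    have : -(k : ℤ) * (-k - 1) / 2 = ((k + 1).choose 2 : ℕ) := by
      rw [Int.natCast_choose_two]; push_cast; ring_nf
    simp only [this, zpow_natCast, zpow_neg, Nat.succ_choose_two, pow_add, norm_mul, norm_pow,
      norm_inv, norm_neg, norm_one, inv_one, one_pow, mul_pow]
    ring

end

theorem jacobi_triple_product (q x : ℂ) (hq0 : 0 < ‖q‖)
    (hq1 : ‖q‖ < 1) (hx : x ≠ 0) :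
    (1 / qp q q) * ∑' n : ℤ, (-1 : ℂ) ^ n * q ^ ((n * (n - 1)) / 2) * x ^ n
      = qp q x * qp q (q / x) := by
  obtain ⟨C, hC⟩ := exists_norm_qBinom_le hq1
  have hsums := tendsto_sum_Icc_mul (summable_norm_theta_term hq1 x) (fun m n => hC _ _)
    (tendsto_qBinom_two_mul hq1)
  have hprods := ((tendsto_qpFin hq1 x).mul (tendsto_qpFin hq1 (q / x))).congr
    (qpFin_mul_qpFin_eq_sum (norm_pos_iff.1 hq0) hq1 hx)
  rw [tendsto_nhds_unique hprods hsums, tsum_mul_right]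
  ring
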